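/- arXiv:1402.3901 — 2 statements merged into one kernel-verified Lean document; each statement's English description precedes it below -/
import Mathlib

section
/- Solutions of Heine's equation at infinity: Let q ∈ ℂ with 0 < |q| < 1 and let a, b, c ∈ ℂ* with aq/b ∉ {q^{−m} : m ≥ 0}. Define y(x) = (θ_q(ax)/θ_q(x)) · ₂φ₁(a, aq/c; aq/b; q, cq/(abx)). Then for every x ∈ ℂ with |x| > |c/(abq)| and x ∉ −q^ℤ: (c − abqx)·y(q²x) − ((c+q) − (a+b)qx)·y(qx) + q(1−x)·y(x) = 0. -/
open scoped BigOperators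

/-- The finite q-Pochhammer symbol `(a;q)_n` for `n : ℕ`. -/
noncomputable def qPochN (q a : ℂ) (n : ℕ) : ℂ :=
  ∏ k ∈ Finset.range n, (1 - a * q ^ k)

/-- The infinite q-Pochhammer symbol `(a;q)_∞`. -/
noncomputable def qPochInf (q a : ℂ) : ℂ :=
  ∏' k : ℕ, (1 - a * q ^ k)

/-- The bilateral q-Pochhammer symbol `(a;q)_n` for `n : ℤ`. -/
noncomputable def qPochZ (q a : ℂ) (n : ℤ) : ℂ :=
  if 0 ≤ n then ∏ k ∈ Finset.range n.toNat, (1 - a * q ^ k)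
  else (∏ k ∈ Finset.range (-n).toNat, (1 - a * q ^ (-((k : ℤ) + 1))))⁻¹

/-- The Jacobi theta function `θ_q(x) = ∑_{n ∈ ℤ} q^{n(n-1)/2} x^n`. -/
noncomputable def theta (q x : ℂ) : ℂ :=
  ∑' n : ℤ, q ^ (n * (n - 1) / 2) * x ^ n


/-- Heine's basic hypergeometric series `₂φ₁(a,b;c;q,x)`. -/
noncomputable def phi21 (q a b c x : ℂ) : ℂ :=
  ∑' n : ℕ, qPochN q a n * qPochN q b n / (qPochN q c n * qPochN q q n) * x ^ n

/-!
The coefficients `Aₙ` of `φ(w) = ₂φ₁(α, β; γ; q, w)` satisfy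
`(1 - γqⁿ)(1 - qⁿ⁺¹) Aₙ₊₁ = (1 - αqⁿ)(1 - βqⁿ) Aₙ`; shifting the summation index turns this into
Heine's q-difference equation
`(γ - αβqw) φ(q²w) - (γ + q - (α + β)qw) φ(qw) + q(1 - w) φ(w) = 0` for `|w| < 1`.
Since `θ_q(qx) = θ_q(x) / x`, the prefactor `θ_q(ax) / θ_q(x)` picks up a factor `1 / a` under
`x ↦ qx`. With `w = c / (abqx)`, which has `|w| < 1` exactly when `|x| > |c / (abq)|`, the left-hand
side of the claimed equation is `-(bx / a) θ_q(ax) / θ_q(x)` times the left-hand side of Heine's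
equation for `₂φ₁(a, aq/c; aq/b; q, w)`.
-/

open Filter Topology

theorem theta_q_mul {q x : ℂ} (hq : q ≠ 0) (hx : x ≠ 0) :
    theta q (q * x) = x⁻¹ * theta q x := by
  have hterm : ∀ n : ℤ, q ^ (n * (n - 1) / 2) * (q * x) ^ n
      = q ^ ((n + 1) * (n + 1 - 1) / 2) * x ^ (n + 1) * x⁻¹ := by
    intro n
    have hexp : (n + 1) * (n + 1 - 1) / 2 = n * (n - 1) / 2 + n := by
      rw [show (n + 1) * (n + 1 - 1) = n * (n - 1) + n * 2 by ring,
        Int.add_mul_ediv_right _ _ two_ne_zero]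
    rw [hexp, zpow_add₀ hq, zpow_add_one₀ hx, mul_zpow]
    field_simp
  rw [theta, tsum_congr hterm, tsum_mul_right, mul_comm, theta]
  congr 1
  exact (Equiv.addRight (1 : ℤ)).tsum_eq fun m => q ^ (m * (m - 1) / 2) * x ^ m

theorem theta_ratio_q_mul {q a x : ℂ} (hq : q ≠ 0) (ha : a ≠ 0) (hx : x ≠ 0) :
    theta q (a * (q * x)) / theta q (q * x) = a⁻¹ * (theta q (a * x) / theta q x) := by
  rw [mul_left_comm, theta_q_mul hq (mul_ne_zero ha hx), theta_q_mul hq hx, mul_inv]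
  field_simp

noncomputable def phi21Coeff (q a b c : ℂ) (n : ℕ) : ℂ :=
  qPochN q a n * qPochN q b n / (qPochN q c n * qPochN q q n)

theorem phi21Coeff_succ (q a b c : ℂ) (n : ℕ) :
    phi21Coeff q a b c (n + 1) = phi21Coeff q a b c n *
      ((1 - a * q ^ n) * (1 - b * q ^ n) / ((1 - c * q ^ n) * (1 - q * q ^ n))) := by
  simp only [phi21Coeff, qPochN, Finset.prod_range_succ]
  rw [mul_mul_mul_comm, mul_mul_mul_comm (∏ k ∈ Finset.range n, (1 - c * q ^ k)), mul_div_mul_comm]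

theorem tendsto_one_sub_mul_pow {R : Type*} [NormedRing R] {q : R} (hq : ‖q‖ < 1) (u : R) :
    Tendsto (fun n : ℕ => 1 - u * q ^ n) atTop (𝓝 1) := by
  simpa using tendsto_const_nhds.sub ((tendsto_pow_atTop_nhds_zero_of_norm_lt_one hq).const_mul u)

theorem summable_phi21Coeff_mul_pow {q w : ℂ} (a b c : ℂ) (hq : ‖q‖ < 1) (hw : ‖w‖ < 1) :
    Summable fun n => phi21Coeff q a b c n * w ^ n := by
  set ρ : ℕ → ℂ := fun n =>
    (1 - a * q ^ n) * (1 - b * q ^ n) / ((1 - c * q ^ n) * (1 - q * q ^ n)) * w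
  have hρ : Tendsto (fun n => ‖ρ n‖) atTop (𝓝 ‖w‖) := by
    have := (((tendsto_one_sub_mul_pow hq a).mul (tendsto_one_sub_mul_pow hq b)).div
      ((tendsto_one_sub_mul_pow hq c).mul (tendsto_one_sub_mul_pow hq q)) (by norm_num)).mul_const w
    simpa [ρ] using this.norm
  refine summable_of_ratio_norm_eventually_le (r := (1 + ‖w‖) / 2) (by linarith) ?_
  filter_upwards [hρ.eventually_le_const (by linarith : ‖w‖ < (1 + ‖w‖) / 2)] with n hn
  have hstep : phi21Coeff q a b c (n + 1) * w ^ (n + 1) = ρ n * (phi21Coeff q a b c n * w ^ n) := by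
    rw [phi21Coeff_succ, pow_succ]; ring
  rw [hstep, norm_mul]
  exact mul_le_mul_of_nonneg_right hn (norm_nonneg _)

theorem phi21Coeff_succ_mul {q a b c : ℂ} {n : ℕ} (hc : c * q ^ n ≠ 1) (hq : q * q ^ n ≠ 1) :
    phi21Coeff q a b c (n + 1) * ((1 - c * q ^ n) * (1 - q * q ^ n)) =
      phi21Coeff q a b c n * ((1 - a * q ^ n) * (1 - b * q ^ n)) := by
  rw [phi21Coeff_succ, mul_assoc, div_mul_cancel₀]
  exact mul_ne_zero (sub_ne_zero.2 hc.symm) (sub_ne_zero.2 hq.symm)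

theorem phi21_heine_equation {q a b c w : ℂ} (hq : ‖q‖ < 1) (hc : ∀ n : ℕ, c * q ^ n ≠ 1)
    (hw : ‖w‖ < 1) :
    (c - a * b * q * w) * phi21 q a b c (q ^ 2 * w)
      - ((c + q) - (a + b) * q * w) * phi21 q a b c (q * w)
      + q * (1 - w) * phi21 q a b c w = 0 := by
  set A := phi21Coeff q a b c
  have hsum : ∀ k : ℕ, HasSum (fun n => A n * (q ^ k * w) ^ n) (phi21 q a b c (q ^ k * w)) := by
    intro k
    refine (summable_phi21Coeff_mul_pow a b c hq ?_).hasSum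
    rw [norm_mul, norm_pow]
    exact (mul_le_of_le_one_left (norm_nonneg w) (pow_le_one₀ (norm_nonneg q) hq.le)).trans_lt hw
  have h0 := hsum 0
  have h1 := hsum 1
  have h2 := hsum 2
  simp only [pow_zero, one_mul, pow_one] at h0 h1
  -- Coefficientwise, Heine's equation says `u (n + 1) = w * v n` with `u 0 = 0`.
  set u : ℕ → ℂ := fun n => (q - c * q ^ n) * (1 - q ^ n) * (A n * w ^ n)
  set v : ℕ → ℂ := fun n => q * (1 - a * q ^ n) * (1 - b * q ^ n) * (A n * w ^ n)
  have hu : HasSum u (c * phi21 q a b c (q ^ 2 * w) - (c + q) * phi21 q a b c (q * w)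
      + q * phi21 q a b c w) := by
    refine (((h2.mul_left c).sub (h1.mul_left (c + q))).add (h0.mul_left q)).congr_fun fun n => ?_
    simp only [u]; ring
  have hv : HasSum v (q * phi21 q a b c w - q * (a + b) * phi21 q a b c (q * w)
      + q * a * b * phi21 q a b c (q ^ 2 * w)) := by
    refine (((h0.mul_left q).sub (h1.mul_left (q * (a + b)))).add
      (h2.mul_left (q * a * b))).congr_fun fun n => ?_
    simp only [v]; ring
  have hshift : ∀ n, u (n + 1) = w * v n := by
    intro n
    have hqn : q * q ^ n ≠ 1 := by
      rw [← pow_succ']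
      exact fun h => (pow_lt_one₀ (norm_nonneg q) hq n.succ_ne_zero).ne
        (by rw [← norm_pow, h, norm_one])
    have hrec := phi21Coeff_succ_mul (a := a) (b := b) (hc n) hqn
    simp only [u, v]
    linear_combination (q * w ^ (n + 1)) * hrec
  have hu0 : u 0 = 0 := by simp [u]
  have hu' := (hasSum_nat_add_iff 1).1 ((hv.mul_left w).congr_fun hshift)
  rw [Finset.sum_range_one, hu0, add_zero] at hu'
  linear_combination hu.unique hu'

/-- The function `y(x) = (θ_q(ax)/θ_q(x)) ₂φ₁(a, aq/c; aq/b; q, cq/(abx))` solves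
Heine's q-difference equation near infinity. -/
theorem heine_solution_at_infinity (q a b c : ℂ)
    (hq0 : 0 < ‖q‖) (hq1 : ‖q‖ < 1)
    (ha0 : a ≠ 0) (hb0 : b ≠ 0) (hc0 : c ≠ 0)
    (hab : ∀ m : ℕ, a * q / b ≠ q ^ (-(m : ℤ))) :
    ∀ x : ℂ, ‖c / (a * b * q)‖ < ‖x‖ → (∀ k : ℤ, x ≠ -q ^ k) →
      (c - a * b * q * x) *
          ((theta q (a * (q ^ 2 * x)) / theta q (q ^ 2 * x)) *
            phi21 q a (a * q / c) (a * q / b) (c * q / (a * b * (q ^ 2 * x))))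
        - ((c + q) - (a + b) * q * x) *
          ((theta q (a * (q * x)) / theta q (q * x)) *
            phi21 q a (a * q / c) (a * q / b) (c * q / (a * b * (q * x))))
        + q * (1 - x) *
          ((theta q (a * x) / theta q x) *
            phi21 q a (a * q / c) (a * q / b) (c * q / (a * b * x))) = 0 := by
  intro x hx _
  have hq : q ≠ 0 := norm_pos_iff.mp hq0
  have hx0 : x ≠ 0 := norm_pos_iff.mp ((norm_nonneg _).trans_lt hx)
  set w := c / (a * b * q) / x
  have hw : ‖w‖ < 1 := by rwa [norm_div, div_lt_one (norm_pos_iff.mpr hx0)]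
  have hγ : ∀ n : ℕ, a * q / b * q ^ n ≠ 1 := fun n h =>
    hab n (by rw [zpow_neg, zpow_natCast]; exact eq_inv_of_mul_eq_one_left h)
  have heine := phi21_heine_equation (a := a) (b := a * q / c) hq1 hγ hw
  have harg2 : c * q / (a * b * (q ^ 2 * x)) = w := by simp only [w]; field_simp
  have harg1 : c * q / (a * b * (q * x)) = q * w := by simp only [w]; field_simp
  have harg0 : c * q / (a * b * x) = q ^ 2 * w := by simp only [w]; field_simp
  have htheta2 : theta q (a * (q ^ 2 * x)) / theta q (q ^ 2 * x)
      = a⁻¹ * (a⁻¹ * (theta q (a * x) / theta q x)) := by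
    rw [pow_two, mul_assoc, theta_ratio_q_mul hq ha0 (mul_ne_zero hq hx0),
      theta_ratio_q_mul hq ha0 hx0]
  rw [htheta2, theta_ratio_q_mul hq ha0 hx0, harg0, harg1, harg2]
  linear_combination (norm := skip) (-(b * x / a) * (theta q (a * x) / theta q x)) * heine
  simp only [w]
  field_simp
  ring
end

section
/- The divergent bilateral series ₂ψ₁ is a formal solution of the q-difference equation: Let q ∈ ℂ with 0 < |q| < 1 and let a₁, a₂, b₁ ∈ ℂ* with b₁ ∉ q^ℤ and a₁, a₂ ∉ {q^k : k ≥ 1}. Define for n ∈ ℤ the coefficients c_n = (a₁;q)_n (a₂;q)_n / (b₁;q)_n · (−1)^n q^{−n(n−1)/2}. Then for every n ∈ ℤ: (b₁/q²)·q^{2n}·c_n − (1/q)·q^n·c_n − a₁a₂·q^{2(n−1)}·c_{n−1} + (a₁+a₂)·q^{n−1}·c_{n−1} − c_{n−1} = 0. (Equivalently, the formal bilateral series u(x) = ∑_{n∈ℤ} c_n x^n satisfies (b₁/q² − a₁a₂x)u(q²x) − (1/q − (a₁+a₂)x)u(qx) − x·u(x) = 0 coefficientwise.) -/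
open scoped BigOperators

/-!
The equation is equivalent to the first-order recurrence
`(1 - b₁ q^m) q^m c_{m+1} = -(1 - a₁ q^m)(1 - a₂ q^m) c_m`,
which follows from `(a;q)_{m+1} = (a;q)_m (1 - a q^m)` (valid for every `m ∈ ℤ` as long as the
factor does not vanish) together with `(m+1)m/2 = m(m-1)/2 + m`.
-/

open Finset

theorem one_sub_mul_zpow_ne_zero {K : Type*} [DivisionRing K] {q a : K} {m : ℤ}
    (h : a ≠ q ^ (-m)) : 1 - a * q ^ m ≠ 0 := by
  rw [sub_ne_zero, ne_comm]
  exact fun hm => h (by rw [zpow_neg, eq_inv_of_mul_eq_one_left hm])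

theorem qPochZ_natCast (q a : ℂ) (n : ℕ) :
    qPochZ q a n = ∏ k ∈ range n, (1 - a * q ^ k) := by
  simp [qPochZ]

theorem qPochZ_neg_natCast (q a : ℂ) (n : ℕ) :
    qPochZ q a (-n) = (∏ k ∈ range n, (1 - a * q ^ (-((k : ℤ) + 1))))⁻¹ := by
  rcases n.eq_zero_or_pos with rfl | hn
  · simp [qPochZ]
  · simp [qPochZ, hn.ne']

/-- For `n < 0`, `qPochZ q a n` is an inverse, hence the junk value `0` when a factor vanishes. -/
theorem qPochZ_add_one (q a : ℂ) (ha : ∀ k : ℕ, 1 ≤ k → a ≠ q ^ k) (n : ℤ) :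
    qPochZ q a (n + 1) = qPochZ q a n * (1 - a * q ^ n) := by
  cases n with
  | ofNat j =>
    rw [Int.ofNat_eq_natCast, ← Nat.cast_add_one, qPochZ_natCast, qPochZ_natCast,
      prod_range_succ, zpow_natCast]
  | negSucc j =>
    have hfac : 1 - a * q ^ (-((j : ℤ) + 1)) ≠ 0 := one_sub_mul_zpow_ne_zero <| by
      rw [neg_neg, ← Nat.cast_add_one, zpow_natCast]
      exact ha _ j.succ_pos
    rw [Int.negSucc_eq, show -((j : ℤ) + 1) + 1 = -j by ring, ← Nat.cast_add_one,
      qPochZ_neg_natCast, qPochZ_neg_natCast, prod_range_succ, Nat.cast_add_one, mul_inv,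
      mul_assoc, inv_mul_cancel₀ hfac, mul_one]

theorem qPochZ_ne_zero (q b : ℂ) (hb : ∀ k : ℤ, b ≠ q ^ k) (n : ℤ) : qPochZ q b n ≠ 0 := by
  obtain ⟨j, rfl | rfl⟩ := n.eq_nat_or_neg
  · rw [qPochZ_natCast, prod_ne_zero_iff]
    exact fun k _ => by simpa using one_sub_mul_zpow_ne_zero (m := k) (hb _)
  · rw [qPochZ_neg_natCast]
    exact inv_ne_zero (prod_ne_zero_iff.mpr fun k _ => one_sub_mul_zpow_ne_zero (hb _))

theorem Int.add_one_mul_ediv_two (m : ℤ) : (m + 1) * m / 2 = m * (m - 1) / 2 + m := by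
  rw [← Int.add_mul_ediv_right _ _ two_ne_zero]
  ring_nf

theorem bilateral_coeff_recurrence (q a₁ a₂ b₁ : ℂ) (hq : q ≠ 0)
    (hbq : ∀ k : ℤ, b₁ ≠ q ^ k)
    (ha₁q : ∀ k : ℕ, 1 ≤ k → a₁ ≠ q ^ k)
    (ha₂q : ∀ k : ℕ, 1 ≤ k → a₂ ≠ q ^ k)
    (c : ℤ → ℂ)
    (hc : ∀ n : ℤ, c n = qPochZ q a₁ n * qPochZ q a₂ n / qPochZ q b₁ n *
      (-1) ^ n * q ^ (-(n * (n - 1) / 2))) (m : ℤ) :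
    (1 - b₁ * q ^ m) * q ^ m * c (m + 1) = -((1 - a₁ * q ^ m) * (1 - a₂ * q ^ m)) * c m := by
  have hb₁q : ∀ k : ℕ, 1 ≤ k → b₁ ≠ q ^ k := fun k _ => by simpa using hbq k
  have hB := qPochZ_ne_zero q b₁ hbq m
  have hfac : 1 - b₁ * q ^ m ≠ 0 := one_sub_mul_zpow_ne_zero (hbq _)
  rw [hc, hc, qPochZ_add_one q a₁ ha₁q, qPochZ_add_one q a₂ ha₂q, qPochZ_add_one q b₁ hb₁q,
    add_sub_cancel_right, Int.add_one_mul_ediv_two, neg_add, zpow_add₀ hq,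
    zpow_add_one₀ (by norm_num), zpow_neg q m]
  field_simp

theorem bilateral_formal_solution_general (q a₁ a₂ b₁ : ℂ)
    (hq0 : 0 < ‖q‖)
    (hbq : ∀ k : ℤ, b₁ ≠ q ^ k)
    (ha₁q : ∀ k : ℕ, 1 ≤ k → a₁ ≠ q ^ k)
    (ha₂q : ∀ k : ℕ, 1 ≤ k → a₂ ≠ q ^ k)
    (c : ℤ → ℂ)
    (hc : ∀ n : ℤ, c n = qPochZ q a₁ n * qPochZ q a₂ n / qPochZ q b₁ n *
      (-1) ^ n * q ^ (-(n * (n - 1) / 2))) :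
    ∀ n : ℤ,
      (b₁ / q ^ 2) * q ^ (2 * n) * c n - (1 / q) * q ^ n * c n
        - a₁ * a₂ * q ^ (2 * (n - 1)) * c (n - 1)
        + (a₁ + a₂) * q ^ (n - 1) * c (n - 1) - c (n - 1) = 0 := by
  intro n
  obtain ⟨m, rfl⟩ : ∃ m, n = m + 1 := ⟨n - 1, by ring⟩
  have hq : q ≠ 0 := norm_pos_iff.mp hq0
  have hrec := bilateral_coeff_recurrence q a₁ a₂ b₁ hq hbq ha₁q ha₂q c hc m
  have hpow_succ : q ^ (2 * (m + 1)) = q ^ 2 * (q ^ m) ^ 2 := by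
    rw [mul_comm, zpow_mul, zpow_add_one₀ hq, zpow_two]; ring
  have hpow : q ^ (2 * m) = (q ^ m) ^ 2 := by rw [mul_comm, zpow_mul, zpow_two, sq]
  rw [add_sub_cancel_right, hpow_succ, hpow, zpow_add_one₀ hq]
  field_simp
  linear_combination -hrec

/-- The divergent bilateral series `₂ψ₁` is a formal solution of the q-difference
equation, expressed coefficientwise. -/
theorem bilateral_formal_solution (q a₁ a₂ b₁ : ℂ)
    (hq0 : 0 < ‖q‖) (hq1 : ‖q‖ < 1)
    (ha₁ : a₁ ≠ 0) (ha₂ : a₂ ≠ 0) (hb₁ : b₁ ≠ 0)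
    (hbq : ∀ k : ℤ, b₁ ≠ q ^ k)
    (ha₁q : ∀ k : ℕ, 1 ≤ k → a₁ ≠ q ^ k)
    (ha₂q : ∀ k : ℕ, 1 ≤ k → a₂ ≠ q ^ k)
    (c : ℤ → ℂ)
    (hc : ∀ n : ℤ, c n = qPochZ q a₁ n * qPochZ q a₂ n / qPochZ q b₁ n *
      (-1) ^ n * q ^ (-(n * (n - 1) / 2))) :
    ∀ n : ℤ,
      (b₁ / q ^ 2) * q ^ (2 * n) * c n - (1 / q) * q ^ n * c n
        - a₁ * a₂ * q ^ (2 * (n - 1)) * c (n - 1)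
        + (a₁ + a₂) * q ^ (n - 1) * c (n - 1) - c (n - 1) = 0 :=
  bilateral_formal_solution_general q a₁ a₂ b₁ hq0 hbq ha₁q ha₂q c hc
end
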